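/- There exist a continuous function u₂ : K → ℝ and a constant C > 0 such that 0 ≤ u₂ ≤ 1 on K, u₂ vanishes on L ∩ K, and (1/C)·(6/7)^n ≤ E_n(u₂) ≤ C·(6/7)^n for every integer n ≥ 1. -/

import Mathlib

open Set

namespace SC

/-- The eight boundary vertices of the Sierpiński carpet. -/
noncomputable def p : Fin 8 → ℝ × ℝ :=
  ![(0, 0), (1 / 2, 0), (1, 0), (1, 1 / 2), (1, 1), (1 / 2, 1), (0, 1), (0, 1 / 2)]

/-- The eight contractions `f_i(x) = (x − p_i)/3 + p_i`. -/
noncomputable def f (i : Fin 8) (x : ℝ × ℝ) : ℝ × ℝ :=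
  ((x.1 - (p i).1) / 3 + (p i).1, (x.2 - (p i).2) / 3 + (p i).2)

/-- The vertex sets `V₀ = {p₀,…,p₇}`, `V_{n+1} = ⋃ f_i(V_n)`. -/
noncomputable def V : ℕ → Set (ℝ × ℝ)
  | 0 => Set.range p
  | n + 1 => ⋃ i : Fin 8, f i '' V n

/-- The Sierpiński carpet: the closure of `V_* = ⋃_n V_n`. -/
noncomputable def K : Set (ℝ × ℝ) := closure (⋃ n, V n)

/-- For a word `w = w₁…w_n`, the composition `f_{w₁} ∘ … ∘ f_{w_n}`. -/
noncomputable def fw {n : ℕ} (w : Fin n → Fin 8) (x : ℝ × ℝ) : ℝ × ℝ :=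
  (List.ofFn w).foldr f x

/-- The Euclidean distance on `ℝ × ℝ`. -/
noncomputable def edist2 (x y : ℝ × ℝ) : ℝ :=
  Real.sqrt ((x.1 - y.1) ^ 2 + (x.2 - y.2) ^ 2)

/-- The graph energy
`E_n(u) = Σ_{w ∈ W_n} Σ (u(p) − u(q))²`, the inner sum being over unordered
pairs of distinct `p, q ∈ V_w` with Euclidean distance `2⁻¹·3⁻ⁿ` (written as
half of the corresponding ordered sum). -/
noncomputable def E (n : ℕ) (u : ℝ × ℝ → ℝ) : ℝ :=
  ∑ w : Fin n → Fin 8,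
    (∑ i : Fin 8, ∑ j : Fin 8,
      if edist2 (fw w (p i)) (fw w (p j)) = 1 / 2 * (1 / 3) ^ n then
        (u (fw w (p i)) - u (fw w (p j))) ^ 2
      else 0) / 2

/-- The boundary `L = ({0,1}×[0,1]) ∪ ([0,1]×{0,1})` of the unit square. -/
def L : Set (ℝ × ℝ) :=
  (({0, 1} : Set ℝ) ×ˢ Set.Icc (0 : ℝ) 1) ∪ (Set.Icc (0 : ℝ) 1 ×ˢ ({0, 1} : Set ℝ))

end SC

/-!
Let `g` be the self-affine devil's staircase on `[0, 1]` with weights `2/7, 3/7, 2/7` on the three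
thirds, i.e. the fixed point of the contraction `h ↦ Σₖ aₖ · h (3x - k)` on monotone ramps from `0`
to `1`, and put `u₂ (x, y) = min (g x, 1 - g x, g y, 1 - g y)`. Under `f_w`, increments of `g` in
the first (second) coordinate are multiplied by the product of the weights of the column (row)
digits of `w`. As `t ↦ min t (1 - t)` is `1`-Lipschitz, the energy of the cell `w` is at most
`a_col(w)² + a_row(w)²`, and summing over all words gives `2 (Σⱼ a_col(j)²)ⁿ = 2 (6/7)ⁿ`. On the left
middle cell `u₂` coincides with `g x`, so the bottom edges of its subcells alone contribute
`(6/7)ⁿ / 49` to `E_{n+1}`.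
-/

open BoundedContinuousFunction

structure IsRamp (φ : ℝ → ℝ) : Prop where
  monotone : Monotone φ
  eq_zero_of_nonpos : ∀ x ≤ 0, φ x = 0
  eq_one_of_one_le : ∀ x, 1 ≤ x → φ x = 1

namespace IsRamp

variable {φ ψ : ℝ → ℝ}

lemma mem_Icc (hφ : IsRamp φ) (x : ℝ) : φ x ∈ Icc 0 1 := by
  constructor
  · calc (0 : ℝ) = φ (min 0 x) := (hφ.eq_zero_of_nonpos _ (min_le_left 0 x)).symm
      _ ≤ φ x := hφ.monotone (min_le_right 0 x)
  · calc φ x ≤ φ (max 1 x) := hφ.monotone (le_max_right 1 x)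
      _ = 1 := hφ.eq_one_of_one_le _ (le_max_left 1 x)

lemma min_one_sub_eq_zero (hφ : IsRamp φ) {t : ℝ} (ht : t = 0 ∨ t = 1) :
    min (φ t) (1 - φ t) = 0 := by
  rcases ht with rfl | rfl
  · simp [hφ.eq_zero_of_nonpos 0 le_rfl]
  · simp [hφ.eq_one_of_one_le 1 le_rfl]

lemma sum_sub_sum (hφ : IsRamp φ) (hψ : IsRamp ψ) (a : Fin 3 → ℝ) (k : Fin 3)
    {s t : ℝ} (hs : s ∈ Icc 0 1) (ht : t ∈ Icc 0 1) :
    ∑ l, a l * φ (s + k - l) - ∑ l, a l * ψ (t + k - l) = a k * (φ s - ψ t) := by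
  rw [← Finset.sum_sub_distrib, Finset.sum_eq_single k]
  · simp only [add_sub_cancel_right, mul_sub]
  · intro l _ hlk
    rcases lt_or_gt_of_ne hlk with hlk | hlk
    · have : (l : ℝ) + 1 ≤ k := by exact_mod_cast hlk
      rw [hφ.eq_one_of_one_le _ (by linarith [hs.1]), hψ.eq_one_of_one_le _ (by linarith [ht.1]),
        sub_self]
    · have : (k : ℝ) + 1 ≤ l := by exact_mod_cast hlk
      rw [hφ.eq_zero_of_nonpos _ (by linarith [hs.2]), hψ.eq_zero_of_nonpos _ (by linarith [ht.2]),
        sub_self]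
  · simp

end IsRamp

lemma isRamp_projIcc : IsRamp fun x => (projIcc (0 : ℝ) 1 zero_le_one x : ℝ) where
  monotone _ _ hxy := monotone_projIcc zero_le_one hxy
  eq_zero_of_nonpos _ hx := by simp [projIcc_of_le_left _ hx]
  eq_one_of_one_le _ hx := by simp [projIcc_of_right_le _ hx]

lemma exists_mul_three_eq_add {x : ℝ} (hx : x ∈ Icc 0 1) :
    ∃ k : Fin 3, ∃ s ∈ Icc (0 : ℝ) 1, 3 * x = s + k := by
  rcases le_total (3 * x) 1 with h1 | h1
  · exact ⟨0, 3 * x, ⟨by linarith [hx.1], h1⟩, by simp⟩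
  rcases le_total (3 * x) 2 with h2 | h2
  · exact ⟨1, 3 * x - 1, ⟨by linarith, by linarith⟩, by simp⟩
  · exact ⟨2, 3 * x - 2, ⟨by linarith, by linarith [hx.2]⟩, by norm_num⟩

section StaircaseOp

noncomputable def staircaseOp (a : Fin 3 → ℝ) (h : ℝ →ᵇ ℝ) : ℝ →ᵇ ℝ :=
  ∑ k : Fin 3, a k • h.compContinuous ⟨fun x => 3 * x - k, by fun_prop⟩

variable {a : Fin 3 → ℝ}

lemma staircaseOp_apply (h : ℝ →ᵇ ℝ) (x : ℝ) :
    staircaseOp a h x = ∑ k, a k * h (3 * x - k) := by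
  simp [staircaseOp]

lemma isRamp_staircaseOp (ha : ∀ k, 0 ≤ a k) (hsum : ∑ k, a k = 1) {h : ℝ →ᵇ ℝ}
    (hh : IsRamp h) : IsRamp (staircaseOp a h) where
  monotone x y hxy := by
    simp only [staircaseOp_apply]
    gcongr with k
    · exact ha k
    · exact hh.monotone (by linarith)
  eq_zero_of_nonpos x hx := by
    rw [staircaseOp_apply]
    refine Finset.sum_eq_zero fun k _ => ?_
    rw [hh.eq_zero_of_nonpos _ (by linarith [(k : ℕ).cast_nonneg (α := ℝ)]), mul_zero]
  eq_one_of_one_le x hx := by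
    rw [staircaseOp_apply, ← hsum]
    refine Finset.sum_congr rfl fun k _ => ?_
    have hk : ((k : ℕ) : ℝ) ≤ 2 := by exact_mod_cast Nat.le_of_lt_succ k.isLt
    rw [hh.eq_one_of_one_le _ (by linarith), mul_one]

lemma dist_staircaseOp_le (ha : ∀ k, 0 ≤ a k) (hsum : ∑ k, a k = 1) {r : ℝ} (hr : 0 ≤ r)
    (har : ∀ k, a k ≤ r) {h h' : ℝ →ᵇ ℝ} (hh : IsRamp h) (hh' : IsRamp h') :
    dist (staircaseOp a h) (staircaseOp a h') ≤ r * dist h h' := by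
  refine (dist_le (by positivity)).2 fun x => ?_
  have hop := isRamp_staircaseOp ha hsum hh
  have hop' := isRamp_staircaseOp ha hsum hh'
  rcases le_or_gt x 0 with hx0 | hx0
  · rw [hop.eq_zero_of_nonpos x hx0, hop'.eq_zero_of_nonpos x hx0, dist_self]
    positivity
  rcases le_or_gt 1 x with hx1 | hx1
  · rw [hop.eq_one_of_one_le x hx1, hop'.eq_one_of_one_le x hx1, dist_self]
    positivity
  obtain ⟨k, s, hs, hxs⟩ := exists_mul_three_eq_add ⟨hx0.le, hx1.le⟩
  rw [Real.dist_eq, staircaseOp_apply, staircaseOp_apply, hxs, hh.sum_sub_sum hh' a k hs hs,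
    abs_mul, abs_of_nonneg (ha k), ← Real.dist_eq]
  exact mul_le_mul (har k) (dist_coe_le_dist s) dist_nonneg hr

lemma isClosed_setOf_isRamp : IsClosed {h : ℝ →ᵇ ℝ | IsRamp h} := by
  have hev (x : ℝ) : Continuous fun h : ℝ →ᵇ ℝ => h x := continuous_eval_const x
  have : {h : ℝ →ᵇ ℝ | IsRamp h} = (⋂ (x : ℝ) (y : ℝ) (_ : x ≤ y), {h | h x ≤ h y}) ∩
      (⋂ x ∈ Iic (0 : ℝ), {h | h x = 0}) ∩ ⋂ x ∈ Ici (1 : ℝ), {h | h x = 1} := by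
    ext h
    simp only [mem_ofPred_eq, mem_inter_iff, mem_iInter, mem_Iic, mem_Ici]
    exact ⟨fun hh => ⟨⟨fun x y => @hh.monotone x y, hh.eq_zero_of_nonpos⟩, hh.eq_one_of_one_le⟩,
      fun ⟨⟨hm, h0⟩, h1⟩ => ⟨fun x y => hm x y, h0, h1⟩⟩
  rw [this]
  refine .inter (.inter ?_ ?_) ?_
  · exact isClosed_iInter fun x => isClosed_iInter fun y => isClosed_iInter fun _ =>
      isClosed_le (hev x) (hev y)
  · exact isClosed_biInter fun x _ => isClosed_eq (hev x) continuous_const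
  · exact isClosed_biInter fun x _ => isClosed_eq (hev x) continuous_const

end StaircaseOp

structure IsStaircase (a : Fin 3 → ℝ) (g : ℝ → ℝ) : Prop extends IsRamp g where
  continuous : Continuous g
  self_affine : ∀ x, g x = ∑ k, a k * g (3 * x - k)

namespace IsStaircase

variable {a : Fin 3 → ℝ} {g : ℝ → ℝ}

theorem exists_isStaircase (ha : ∀ k, 0 ≤ a k) (hsum : ∑ k, a k = 1) {r : NNReal} (hr : r < 1)
    (har : ∀ k, a k ≤ r) : ∃ g, IsStaircase a g := by
  let ramp : ℝ →ᵇ ℝ := .mkOfBound ⟨_, (continuous_projIcc (h := zero_le_one)).subtype_val⟩ 1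
    fun x y => Real.dist_le_of_mem_Icc_01 (projIcc _ _ zero_le_one x).2
      (projIcc _ _ zero_le_one y).2
  have hmaps : MapsTo (staircaseOp a) {h | IsRamp h} {h | IsRamp h} :=
    fun _ hh => isRamp_staircaseOp ha hsum hh
  have hcontr : ContractingWith r (hmaps.restrict _ _ _) :=
    ⟨hr, LipschitzWith.of_dist_le_mul fun h h' => dist_staircaseOp_le ha hsum r.2 har h.2 h'.2⟩
  obtain ⟨g, hg, hfix, -⟩ := hcontr.exists_fixedPoint' isClosed_setOf_isRamp.isComplete hmaps
    (x := ramp) isRamp_projIcc (edist_ne_top _ _)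
  exact ⟨g, hg, g.continuous, fun x => by rw [← staircaseOp_apply, hfix.eq]⟩

lemma sub_div_three (hg : IsStaircase a g) (k : Fin 3) {s t : ℝ} (hs : s ∈ Icc 0 1)
    (ht : t ∈ Icc 0 1) : g ((s + k) / 3) - g ((t + k) / 3) = a k * (g s - g t) := by
  rw [hg.self_affine, hg.self_affine ((t + k) / 3), mul_div_cancel₀ _ three_ne_zero,
    mul_div_cancel₀ _ three_ne_zero]
  exact hg.sum_sub_sum hg.toIsRamp a k hs ht

lemma apply_one_third (hg : IsStaircase a g) : g (1 / 3) = a 0 := by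
  rw [hg.self_affine, Fin.sum_univ_three]
  norm_num [hg.eq_one_of_one_le, hg.eq_zero_of_nonpos]

lemma apply_two_thirds (hg : IsStaircase a g) : g (2 / 3) = a 0 + a 1 := by
  rw [hg.self_affine, Fin.sum_univ_three]
  norm_num [hg.eq_one_of_one_le, hg.eq_zero_of_nonpos]

lemma apply_half (hg : IsStaircase a g) (hsum : ∑ k, a k = 1) (hsymm : a 0 = a 2)
    (ha : a 0 ≠ 0) : g (1 / 2) = 1 / 2 := by
  have h := hg.self_affine (1 / 2)
  rw [Fin.sum_univ_three] at hsum h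
  norm_num [hg.eq_one_of_one_le, hg.eq_zero_of_nonpos] at h
  refine mul_left_cancel₀ ha ?_
  linear_combination (1 / 2) * h + (g (1 / 2) / 2) * hsum + (g (1 / 2) / 2) * hsymm

end IsStaircase

lemma sum_sum_ite_adjacent {G : Type*} [AddCommGroup G] [Fintype G] [DecidableEq G]
    {c : G} (hc : c + c ≠ 0) (F : G → G → ℝ) :
    ∑ i, ∑ j, (if j = i + c ∨ i = j + c then F i j else 0) =
      ∑ i, (F i (i + c) + F (i + c) i) := by
  have hne (i : G) : i + c ≠ i - c := fun h =>
    hc (eq_neg_iff_add_eq_zero.1 (by simpa [sub_eq_add_neg] using h))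
  have hrow (i : G) :
      ∑ j, (if j = i + c ∨ i = j + c then F i j else 0) = F i (i + c) + F i (i - c) := by
    have hmem (j : G) : (j = i + c ∨ i = j + c) ↔ j ∈ ({i + c, i - c} : Finset G) := by
      simp [eq_sub_iff_add_eq, eq_comm]
    simp_rw [hmem, Finset.sum_ite_mem, Finset.univ_inter, Finset.sum_pair (hne i)]
  rw [Finset.sum_congr rfl fun i _ => hrow i, Finset.sum_add_distrib, Finset.sum_add_distrib]
  congr 1
  exact Fintype.sum_equiv (Equiv.subRight c) _ _ fun i => by simp

lemma sum_prod_sq_eq_pow {α : Type*} [Fintype α] [DecidableEq α] (c : α → ℝ) (n : ℕ) :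
    ∑ w : Fin n → α, (∏ k, c (w k)) ^ 2 = (∑ j, c j ^ 2) ^ n := by
  simp_rw [← Finset.prod_pow, ← Fintype.prod_sum (fun _ j => c j ^ 2), Finset.prod_const,
    Finset.card_univ, Fintype.card_fin]

lemma sum_cons_le_sum {α : Type*} [Fintype α] {n : ℕ} {F : (Fin (n + 1) → α) → ℝ}
    (hF : ∀ w, 0 ≤ F w) (j : α) : ∑ w : Fin n → α, F (Fin.cons j w) ≤ ∑ w, F w := by
  classical
  calc ∑ w : Fin n → α, F (Fin.cons j w) = ∑ w ∈ Finset.univ.image (Fin.cons j), F w :=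
        (Finset.sum_image (Fin.cons_right_injective (α := fun _ => α) j).injOn).symm
    _ ≤ ∑ w, F w := Finset.sum_le_univ_sum_of_nonneg hF

lemma abs_min_one_sub_sub_le (x y : ℝ) : |min x (1 - x) - min y (1 - y)| ≤ |x - y| :=
  (abs_min_sub_min_le_max _ _ _ _).trans <| max_le le_rfl <| by
    rw [sub_sub_sub_cancel_left, abs_sub_comm]

namespace SC

def col : Fin 8 → Fin 3 := ![0, 1, 2, 2, 2, 1, 0, 0]

def row : Fin 8 → Fin 3 := ![0, 0, 0, 1, 2, 2, 2, 1]

lemma f_fst (j : Fin 8) (z : ℝ × ℝ) : (f j z).1 = (z.1 + col j) / 3 := by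
  fin_cases j <;> simp [f, p, col] <;> ring

lemma f_snd (j : Fin 8) (z : ℝ × ℝ) : (f j z).2 = (z.2 + row j) / 3 := by
  fin_cases j <;> simp [f, p, row] <;> ring

lemma p_mem_Icc (i : Fin 8) : (p i).1 ∈ Icc 0 1 ∧ (p i).2 ∈ Icc 0 1 := by
  fin_cases i <;> norm_num [p]

lemma fw_succ {n : ℕ} (w : Fin (n + 1) → Fin 8) (x : ℝ × ℝ) :
    fw w x = f (w 0) (fw (Fin.tail w) x) := by
  simp only [fw, List.ofFn_succ, List.foldr_cons]
  rfl

lemma fw_cons {n : ℕ} (j : Fin 8) (w : Fin n → Fin 8) (x : ℝ × ℝ) :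
    fw (Fin.cons j w) x = f j (fw w x) :=
  fw_succ _ x

lemma mem_Icc_fw {π : ℝ × ℝ → ℝ} {d : Fin 8 → Fin 3} (hπ : ∀ j z, π (f j z) = (π z + d j) / 3)
    {n : ℕ} (w : Fin n → Fin 8) {z : ℝ × ℝ} (hz : π z ∈ Icc 0 1) : π (fw w z) ∈ Icc 0 1 := by
  induction n with
  | zero => exact hz
  | succ n ih =>
    obtain ⟨h0, h1⟩ := ih (Fin.tail w)
    have hd : ((d (w 0) : ℕ) : ℝ) ≤ 2 := by exact_mod_cast Nat.le_of_lt_succ (d (w 0)).isLt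
    rw [fw_succ, hπ]
    constructor <;> linarith [Nat.cast_nonneg (α := ℝ) (d (w 0) : ℕ)]

lemma _root_.IsStaircase.sub_fw {a : Fin 3 → ℝ} {g : ℝ → ℝ} (hg : IsStaircase a g)
    {π : ℝ × ℝ → ℝ} {d : Fin 8 → Fin 3} (hπ : ∀ j z, π (f j z) = (π z + d j) / 3)
    {n : ℕ} (w : Fin n → Fin 8) {z z' : ℝ × ℝ} (hz : π z ∈ Icc 0 1) (hz' : π z' ∈ Icc 0 1) :
    g (π (fw w z)) - g (π (fw w z')) = (∏ k, a (d (w k))) * (g (π z) - g (π z')) := by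
  induction n with
  | zero => simp [fw]
  | succ n ih =>
    rw [fw_succ, fw_succ, hπ, hπ, hg.sub_div_three _ (mem_Icc_fw hπ _ hz) (mem_Icc_fw hπ _ hz'),
      ih, Fin.prod_univ_succ, mul_assoc]
    rfl

lemma edist2_f (j : Fin 8) (x y : ℝ × ℝ) : edist2 (f j x) (f j y) = edist2 x y / 3 := by
  have : ((f j x).1 - (f j y).1) ^ 2 + ((f j x).2 - (f j y).2) ^ 2
      = ((x.1 - y.1) ^ 2 + (x.2 - y.2) ^ 2) * (1 / 3) ^ 2 := by simp only [f]; ring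
  rw [edist2, edist2, this, Real.sqrt_mul (by positivity), Real.sqrt_sq (by norm_num)]
  ring

lemma edist2_fw {n : ℕ} (w : Fin n → Fin 8) (x y : ℝ × ℝ) :
    edist2 (fw w x) (fw w y) = (1 / 3) ^ n * edist2 x y := by
  induction n with
  | zero => simp [fw]
  | succ n ih => rw [fw_succ, fw_succ, edist2_f, ih, pow_succ]; ring

lemma edist2_p_eq_half_iff (i j : Fin 8) :
    edist2 (p i) (p j) = 1 / 2 ↔ j = i + 1 ∨ i = j + 1 := by
  rw [edist2, Real.sqrt_eq_iff_mul_self_eq (by positivity) (by norm_num)]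
  fin_cases i <;> fin_cases j <;> norm_num [p] <;> decide

lemma E_eq_sum_edges (n : ℕ) (u : ℝ × ℝ → ℝ) :
    E n u = ∑ w : Fin n → Fin 8, ∑ i, (u (fw w (p i)) - u (fw w (p (i + 1)))) ^ 2 := by
  refine Finset.sum_congr rfl fun w _ => ?_
  have hadj (i j : Fin 8) :
      edist2 (fw w (p i)) (fw w (p j)) = 1 / 2 * (1 / 3) ^ n ↔ j = i + 1 ∨ i = j + 1 := by
    rw [edist2_fw, mul_comm, mul_left_inj' (by positivity), edist2_p_eq_half_iff]
  simp_rw [hadj, sum_sum_ite_adjacent (by decide : (1 : Fin 8) + 1 ≠ 0),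
    sub_sq_comm (u (fw w (p (_ + 1)))), ← two_mul, ← Finset.mul_sum]
  ring

noncomputable def u (g : ℝ → ℝ) (z : ℝ × ℝ) : ℝ :=
  min (min (g z.1) (1 - g z.1)) (min (g z.2) (1 - g z.2))

lemma continuous_u {g : ℝ → ℝ} (hg : Continuous g) : Continuous (u g) := by
  unfold u
  fun_prop

lemma u_mem_Icc {g : ℝ → ℝ} (hg : IsRamp g) (z : ℝ × ℝ) : u g z ∈ Icc 0 1 := by
  have h1 := hg.mem_Icc z.1
  have h2 := hg.mem_Icc z.2
  refine ⟨le_min (le_min h1.1 (by linarith [h1.2])) (le_min h2.1 (by linarith [h2.2])), ?_⟩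
  exact (min_le_left _ _).trans ((min_le_left _ _).trans h1.2)

lemma u_eq_zero_of_mem_L {g : ℝ → ℝ} (hg : IsRamp g) {z : ℝ × ℝ} (hz : z ∈ L) : u g z = 0 := by
  refine le_antisymm ?_ (u_mem_Icc hg z).1
  rcases hz with ⟨hz1, -⟩ | ⟨-, hz2⟩
  · exact (min_le_left _ _).trans (hg.min_one_sub_eq_zero hz1).le
  · exact (min_le_right _ _).trans (hg.min_one_sub_eq_zero hz2).le

lemma u_sub_sq_le (g : ℝ → ℝ) (z z' : ℝ × ℝ) :
    (u g z - u g z') ^ 2 ≤ (g z.1 - g z'.1) ^ 2 + (g z.2 - g z'.2) ^ 2 := by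
  have h : |u g z - u g z'| ≤ max |g z.1 - g z'.1| |g z.2 - g z'.2| :=
    (abs_min_sub_min_le_max _ _ _ _).trans
      (max_le_max (abs_min_one_sub_sub_le _ _) (abs_min_one_sub_sub_le _ _))
  calc (u g z - u g z') ^ 2 ≤ (max |g z.1 - g z'.1| |g z.2 - g z'.2|) ^ 2 := by
        rw [← sq_abs]
        gcongr
    _ ≤ _ := by
        rcases max_choice |g z.1 - g z'.1| |g z.2 - g z'.2| with hm | hm <;>
          rw [hm, sq_abs] <;> nlinarith [sq_nonneg (g z.1 - g z'.1), sq_nonneg (g z.2 - g z'.2)]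

/-- With symmetric weights `(a, 1 - 2a, a)` the energy bounds grow like `(6a² + 2(1 - 2a)²)ⁿ`;
`a = 2/7` minimizes this rate, which is then `6/7`. -/
noncomputable def weights : Fin 3 → ℝ := ![2 / 7, 3 / 7, 2 / 7]

lemma sum_weights : ∑ k, weights k = 1 := by
  simp [Fin.sum_univ_three, weights]
  norm_num

lemma sum_weights_col_sq : ∑ j, weights (col j) ^ 2 = 6 / 7 := by
  simp [Fin.sum_univ_eight, weights, col]
  norm_num

lemma sum_weights_row_sq : ∑ j, weights (row j) ^ 2 = 6 / 7 := by
  simp [Fin.sum_univ_eight, weights, row]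
  norm_num

lemma exists_isStaircase_weights : ∃ g, IsStaircase weights g := by
  refine IsStaircase.exists_isStaircase (r := 3 / 7) (fun k => ?_) sum_weights ?_ fun k => ?_
  · fin_cases k <;> norm_num [weights]
  · rw [← NNReal.coe_lt_coe]
    norm_num
  · fin_cases k <;> norm_num [weights]

section Energy

variable {g : ℝ → ℝ}

lemma apply_half_of_isStaircase (hg : IsStaircase weights g) : g 2⁻¹ = 2⁻¹ := by
  simpa using hg.apply_half sum_weights rfl (by simp [weights])

lemma sum_sq_sub_edges_eq_one (hg : IsStaircase weights g) :
    (∑ i, (g (p i).1 - g (p (i + 1)).1) ^ 2 = 1) ∧ ∑ i, (g (p i).2 - g (p (i + 1)).2) ^ 2 = 1 := by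
  have h0 := hg.eq_zero_of_nonpos 0 le_rfl
  have h1 := hg.eq_one_of_one_le 1 le_rfl
  have h2 := apply_half_of_isStaircase hg
  constructor <;> simp [Fin.sum_univ_eight, p, h0, h1, h2] <;> norm_num

lemma sum_edges_le (hg : IsStaircase weights g) {n : ℕ} (w : Fin n → Fin 8) :
    ∑ i, (u g (fw w (p i)) - u g (fw w (p (i + 1)))) ^ 2 ≤
      (∏ k, weights (col (w k))) ^ 2 + (∏ k, weights (row (w k))) ^ 2 := by
  obtain ⟨hfst, hsnd⟩ := sum_sq_sub_edges_eq_one hg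
  have hx (i j : Fin 8) := hg.sub_fw (π := Prod.fst) f_fst w (p_mem_Icc i).1 (p_mem_Icc j).1
  have hy (i j : Fin 8) := hg.sub_fw (π := Prod.snd) f_snd w (p_mem_Icc i).2 (p_mem_Icc j).2
  calc _ ≤ ∑ i, ((g (fw w (p i)).1 - g (fw w (p (i + 1))).1) ^ 2 +
          (g (fw w (p i)).2 - g (fw w (p (i + 1))).2) ^ 2) :=
        Finset.sum_le_sum fun i _ => u_sub_sq_le g _ _
    _ = (∏ k, weights (col (w k))) ^ 2 * ∑ i, (g (p i).1 - g (p (i + 1)).1) ^ 2 +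
          (∏ k, weights (row (w k))) ^ 2 * ∑ i, (g (p i).2 - g (p (i + 1)).2) ^ 2 := by
        simp_rw [hx, hy, mul_pow, Finset.mul_sum, Finset.sum_add_distrib]
    _ = _ := by rw [hfst, hsnd, mul_one, mul_one]

lemma E_le (hg : IsStaircase weights g) (n : ℕ) : E n (u g) ≤ 2 * (6 / 7) ^ n := by
  rw [E_eq_sum_edges]
  calc _ ≤ ∑ w : Fin n → Fin 8,
          ((∏ k, weights (col (w k))) ^ 2 + (∏ k, weights (row (w k))) ^ 2) :=
        Finset.sum_le_sum fun w _ => sum_edges_le hg w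
    _ = 2 * (6 / 7) ^ n := by
        rw [Finset.sum_add_distrib, sum_prod_sq_eq_pow (fun j => weights (col j)),
          sum_prod_sq_eq_pow (fun j => weights (row j)), sum_weights_col_sq, sum_weights_row_sq]
        ring

lemma u_eq_apply_fst (hg : IsStaircase weights g) {z : ℝ × ℝ} (h1 : z.1 ≤ 1 / 3)
    (h2 : z.2 ∈ Icc (1 / 3) (2 / 3)) : u g z = g z.1 := by
  have hx : g z.1 ≤ 2 / 7 :=
    (hg.monotone h1).trans_eq (by rw [hg.apply_one_third]; simp [weights])
  have hy1 : 2 / 7 ≤ g z.2 :=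
    (hg.monotone h2.1).trans_eq' (by rw [hg.apply_one_third]; simp [weights])
  have hy2 : g z.2 ≤ 5 / 7 :=
    (hg.monotone h2.2).trans_eq (by rw [hg.apply_two_thirds]; norm_num [weights])
  rw [u, min_eq_left (by linarith : g z.1 ≤ 1 - g z.1),
    min_eq_left (le_min (by linarith) (by linarith))]

lemma sum_edges_cons_seven_ge (hg : IsStaircase weights g) {n : ℕ} (w : Fin n → Fin 8) :
    (∏ k, weights (col (w k))) ^ 2 / 49 ≤
      ∑ i, (u g (fw (Fin.cons 7 w) (p i)) - u g (fw (Fin.cons 7 w) (p (i + 1)))) ^ 2 := by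
  have hcell (i : Fin 8) : u g (fw (Fin.cons 7 w) (p i)) = g (fw (Fin.cons 7 w) (p i)).1 := by
    have h1 := mem_Icc_fw f_fst w (p_mem_Icc i).1
    have h2 := mem_Icc_fw f_snd w (p_mem_Icc i).2
    apply u_eq_apply_fst hg
    · rw [fw_cons, f_fst, show col 7 = 0 from rfl]
      norm_num
      linarith [h1.2]
    · rw [fw_cons, f_snd, show row 7 = 1 from rfl]
      norm_num
      constructor <;> linarith [h2.1, h2.2]
  have hscale := hg.sub_fw (π := Prod.fst) f_fst (Fin.cons 7 w) (p_mem_Icc 0).1 (p_mem_Icc 1).1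
  have h0 := hg.eq_zero_of_nonpos 0 le_rfl
  have h2 := apply_half_of_isStaircase hg
  calc (∏ k, weights (col (w k))) ^ 2 / 49
      = (u g (fw (Fin.cons 7 w) (p 0)) - u g (fw (Fin.cons 7 w) (p (0 + 1)))) ^ 2 := by
        rw [hcell, hcell, zero_add, hscale, Fin.prod_univ_succ]
        simp [p, col, weights, h0, h2]
        ring
    _ ≤ _ := Finset.single_le_sum
        (f := fun i => (u g (fw (Fin.cons 7 w) (p i)) - u g (fw (Fin.cons 7 w) (p (i + 1)))) ^ 2)
        (fun i _ => sq_nonneg _) (Finset.mem_univ 0)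

lemma le_E_succ (hg : IsStaircase weights g) (n : ℕ) :
    1 / 49 * (6 / 7) ^ n ≤ E (n + 1) (u g) := by
  rw [E_eq_sum_edges]
  calc 1 / 49 * (6 / 7) ^ n = ∑ w : Fin n → Fin 8, (∏ k, weights (col (w k))) ^ 2 / 49 := by
        rw [← Finset.sum_div, sum_prod_sq_eq_pow (fun j => weights (col j)), sum_weights_col_sq]
        ring
    _ ≤ _ := Finset.sum_le_sum fun w _ => sum_edges_cons_seven_ge hg w
    _ ≤ _ := sum_cons_le_sum
      (F := fun w => ∑ i, (u g (fw w (p i)) - u g (fw w (p (i + 1)))) ^ 2)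
      (fun w => Finset.sum_nonneg fun i _ => sq_nonneg _) 7

end Energy

end SC

/-- Lemma 3.3: there exist a continuous `u₂ : K → ℝ` and `C > 0` with
`0 ≤ u₂ ≤ 1` on `K`, `u₂ = 0` on `L ∩ K`, and
`(1/C)·(6/7)^n ≤ E_n(u₂) ≤ C·(6/7)^n` for all `n ≥ 1`. -/
theorem stmt_6 :
    ∃ (u₂ : ℝ × ℝ → ℝ) (C : ℝ), 0 < C ∧ ContinuousOn u₂ SC.K ∧
      (∀ x ∈ SC.K, u₂ x ∈ Set.Icc (0 : ℝ) 1) ∧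
      (∀ x ∈ SC.L ∩ SC.K, u₂ x = 0) ∧
      ∀ n : ℕ, 1 ≤ n →
        (1 / C) * (6 / 7) ^ n ≤ SC.E n u₂ ∧ SC.E n u₂ ≤ C * (6 / 7) ^ n := by
  obtain ⟨g, hg⟩ := SC.exists_isStaircase_weights
  refine ⟨SC.u g, 42, by norm_num, (SC.continuous_u hg.continuous).continuousOn,
    fun z _ => SC.u_mem_Icc hg.toIsRamp z, fun z hz => SC.u_eq_zero_of_mem_L hg.toIsRamp hz.1,
    fun n hn => ⟨?_, ?_⟩⟩
  · obtain ⟨m, rfl⟩ := Nat.exists_eq_add_of_le' hn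
    calc 1 / 42 * (6 / 7) ^ (m + 1) = 1 / 49 * (6 / 7) ^ m := by ring
      _ ≤ _ := SC.le_E_succ hg m
  · calc _ ≤ 2 * (6 / 7) ^ n := SC.E_le hg n
      _ ≤ 42 * (6 / 7) ^ n := by gcongr; norm_num
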